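/- arXiv:1203.4717 — 5 statements merged into one kernel-verified Lean document; each statement's English description precedes it below -/
import Mathlib

section
/- Let S and T be Hilbert spaces and c : S × T → ℝ a bounded bilinear form satisfying the inf-sup condition: there exists β > 0 such that for all t ∈ T, sup over nonzero s ∈ S of c(s,t)/‖s‖ ≥ β‖t‖. Then for every bounded linear functional ξ ∈ T*, there exists s ∈ S with c(s,t) = ξ(t) for all t ∈ T and ‖s‖_S ≤ β⁻¹‖ξ‖_{T*}. -/
/-!
By the Riesz representation, `c s t = ⟪A t, s⟫` for a bounded operator `A : T → S`, and the
inf-sup condition says exactly that `‖A t‖ ≥ β ‖t‖`. Hence `ξ ∘ A⁻¹` is a functional on the range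
of `A` of norm at most `β⁻¹ ‖ξ‖`; Hahn–Banach extends it to all of `S` without increasing the
norm, and its Riesz representative is the required `s`.
-/

open InnerProductSpace

theorem ContinuousLinearMap.iSup_apply_div_norm_le_norm_flip {E F : Type*}
    [NormedAddCommGroup E] [NormedSpace ℝ E] [NormedAddCommGroup F] [NormedSpace ℝ F]
    (c : E →L[ℝ] F →L[ℝ] ℝ) (y : F) :
    ⨆ x : {x : E // x ≠ 0}, c x.1 y / ‖x.1‖ ≤ ‖c.flip y‖ := by
  refine Real.iSup_le (fun ⟨x, hx⟩ => ?_) (norm_nonneg _)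
  rw [div_le_iff₀ (norm_pos_iff.mpr hx)]
  exact (le_abs_self _).trans ((c.flip y).le_opNorm x)

theorem LinearMap.exists_dual_comp_eq_of_le_mul_norm {𝕜 E F : Type*} [RCLike 𝕜]
    [NormedAddCommGroup E] [NormedSpace 𝕜 E] [NormedAddCommGroup F] [NormedSpace 𝕜 F]
    (A : E →ₗ[𝕜] F) {K : ℝ} (hK : 0 ≤ K) (hA : ∀ x, ‖x‖ ≤ K * ‖A x‖) (ξ : StrongDual 𝕜 E) :
    ∃ g : StrongDual 𝕜 F, (∀ x, g (A x) = ξ x) ∧ ‖g‖ ≤ K * ‖ξ‖ := by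
  have hinj : Function.Injective A :=
    (injective_iff_map_eq_zero A).2 fun x hx => norm_le_zero_iff.1 (by simpa [hx] using hA x)
  let e := LinearEquiv.ofInjective A hinj
  have hbound : ∀ y : LinearMap.range A, ‖ξ (e.symm y)‖ ≤ K * ‖ξ‖ * ‖y‖ := fun y =>
    calc ‖ξ (e.symm y)‖ ≤ ‖ξ‖ * ‖e.symm y‖ := ξ.le_opNorm _
      _ ≤ ‖ξ‖ * (K * ‖A (e.symm y)‖) := by gcongr; exact hA _
      _ = K * ‖ξ‖ * ‖y‖ := by rw [LinearEquiv.ofInjective_symm_apply, Submodule.coe_norm]; ring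
  obtain ⟨g, hg, hgnorm⟩ := exists_extension_norm_eq _
    ((ξ.toLinearMap ∘ₗ e.symm.toLinearMap).mkContinuous _ hbound)
  refine ⟨g, fun x => ?_, hgnorm ▸ LinearMap.mkContinuous_norm_le _ (by positivity) hbound⟩
  simpa [e] using hg (e x)

theorem stmt0_general
    {S T : Type*} [NormedAddCommGroup S] [InnerProductSpace ℝ S] [CompleteSpace S]
    [NormedAddCommGroup T] [InnerProductSpace ℝ T]
    (c : S →L[ℝ] T →L[ℝ] ℝ) (β : ℝ) (hβ : 0 < β)
    (hinfsup : ∀ t : T, β * ‖t‖ ≤ ⨆ s : {s : S // s ≠ 0}, c s.1 t / ‖s.1‖) :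
    ∀ ξ : T →L[ℝ] ℝ, ∃ s : S, (∀ t : T, c s t = ξ t) ∧ ‖s‖ ≤ β⁻¹ * ‖ξ‖ := by
  intro ξ
  let A : T →L[ℝ] S := (toDual ℝ S).symm.toContinuousLinearEquiv.toContinuousLinearMap ∘L c.flip
  have hA : ∀ t, ‖t‖ ≤ β⁻¹ * ‖A t‖ := fun t => by
    rw [le_inv_mul_iff₀ hβ, show ‖A t‖ = ‖c.flip t‖ from (toDual ℝ S).symm.norm_map _]
    exact (hinfsup t).trans (c.iSup_apply_div_norm_le_norm_flip t)
  obtain ⟨g, hg, hgnorm⟩ :=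
    A.toLinearMap.exists_dual_comp_eq_of_le_mul_norm (inv_nonneg.2 hβ.le) hA ξ
  refine ⟨(toDual ℝ S).symm g, fun t => ?_, ((toDual ℝ S).symm.norm_map g).trans_le hgnorm⟩
  calc c ((toDual ℝ S).symm g) t = ⟪A t, (toDual ℝ S).symm g⟫_ℝ :=
      (toDual_symm_apply (y := c.flip t)).symm
    _ = g (A t) := by rw [real_inner_comm]; exact toDual_symm_apply
    _ = ξ t := hg t

/-- Inf-sup condition implies existence of a bounded right inverse:
for every bounded functional `ξ` on `T` there is `s ∈ S` with `c s · = ξ` and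
`‖s‖ ≤ β⁻¹ ‖ξ‖`. -/
theorem stmt0
    {S T : Type*} [NormedAddCommGroup S] [InnerProductSpace ℝ S] [CompleteSpace S]
    [NormedAddCommGroup T] [InnerProductSpace ℝ T] [CompleteSpace T]
    (c : S →L[ℝ] T →L[ℝ] ℝ) (β : ℝ) (hβ : 0 < β)
    (hinfsup : ∀ t : T, β * ‖t‖ ≤ ⨆ s : {s : S // s ≠ 0}, c s.1 t / ‖s.1‖) :
    ∀ ξ : T →L[ℝ] ℝ, ∃ s : S, (∀ t : T, c s t = ξ t) ∧ ‖s‖ ≤ β⁻¹ * ‖ξ‖ :=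
  stmt0_general c β hβ hinfsup
end

section
/- Let S, T₁, T₂ be Hilbert spaces, and let c₁ : S × T₁ → ℝ and c₂ : S × T₂ → ℝ be bounded bilinear forms each satisfying an inf-sup condition for the pairs {S, T₁} and {S, T₂} respectively. Assume S = ker c₁ + ker c₂, where ker cᵢ = {s ∈ S : cᵢ(s,t) = 0 for all t ∈ Tᵢ}, and the decomposition is bounded: every v ∈ S can be written v = w + (v−w) with w ∈ ker c₂, v−w ∈ ker c₁, and ‖w‖ ≤ C‖v‖. Then the bilinear form c : S × (T₁ × T₂) → ℝ defined by c(s,(t₁,t₂)) = c₁(s,t₁) + c₂(s,t₂) satisfies the inf-sup condition for the pair {S, T₁ × T₂}. -/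
/-!
Testing the combined form against `(t₁, t₂)` gives the functional `φ₁ + φ₂` with
`φᵢ = cᵢ(·, tᵢ)`, and the inf-sup quotient of a functional is its dual norm. Splitting
`v = w + (v - w)` with `w ∈ ker c₂`, `v - w ∈ ker c₁` gives `φ₁ v = (φ₁ + φ₂) w` and
`φ₂ v = (φ₁ + φ₂) (v - w)`, so `‖φ₁‖ ≤ C ‖φ₁ + φ₂‖` and `‖φ₂‖ ≤ (1 + C) ‖φ₁ + φ₂‖`.
The inf-sup conditions for `c₁`, `c₂` then bound `‖t₁‖ + ‖t₂‖` by a multiple of `‖φ₁ + φ₂‖`.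
-/

open WithLp in
theorem WithLp.prod_norm_le_norm_fst_add_norm_snd {p : ENNReal} [Fact (1 ≤ p)]
    {α β : Type*} [SeminormedAddCommGroup α] [SeminormedAddCommGroup β]
    (x : WithLp p (α × β)) : ‖x‖ ≤ ‖x.fst‖ + ‖x.snd‖ := by
  have hsplit : x = toLp p (x.fst, (0 : β)) + toLp p ((0 : α), x.snd) := by
    rw [← toLp_add, Prod.mk_add_mk, add_zero, zero_add]; rfl
  calc ‖x‖ = ‖toLp p (x.fst, (0 : β)) + toLp p ((0 : α), x.snd)‖ := congrArg norm hsplit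
    _ ≤ ‖toLp p (x.fst, (0 : β))‖ + ‖toLp p ((0 : α), x.snd)‖ := norm_add_le _ _
    _ = ‖x.fst‖ + ‖x.snd‖ := by rw [norm_toLp_fst, norm_toLp_snd]

namespace ContinuousLinearMap

theorem iSup_apply_div_norm_eq_opNorm {E : Type*} [NormedAddCommGroup E] [NormedSpace ℝ E]
    (φ : E →L[ℝ] ℝ) :
    ⨆ s : {s : E // s ≠ 0}, φ s / ‖s.1‖ = ‖φ‖ := by
  rcases isEmpty_or_nonempty {s : E // s ≠ 0} with hE | ⟨⟨s₀, hs₀⟩⟩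
  · have hφ : φ = 0 := ext fun s => by
      by_contra h
      exact hE.false ⟨s, fun hs => h (by simp [hs])⟩
    simp [hφ]
  · have : Nonempty {s : E // s ≠ 0} := ⟨⟨s₀, hs₀⟩⟩
    set M := ⨆ s : {s : E // s ≠ 0}, φ s / ‖s.1‖
    have hratio (s : {s : E // s ≠ 0}) : φ s / ‖s.1‖ ≤ ‖φ‖ :=
      (div_le_div_of_nonneg_right (le_abs_self _) (norm_nonneg _)).trans (φ.ratio_le_opNorm s)
    have hle (s : E) (hs : s ≠ 0) : φ s ≤ M * ‖s‖ :=
      (div_le_iff₀ (norm_pos_iff.2 hs)).1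
        (le_ciSup ⟨‖φ‖, Set.forall_mem_range.2 hratio⟩ ⟨s, hs⟩)
    have hle_neg (s : E) (hs : s ≠ 0) : -φ s ≤ M * ‖s‖ := by
      simpa using hle (-s) (neg_ne_zero.2 hs)
    have hM : 0 ≤ M := by
      nlinarith [hle s₀ hs₀, hle_neg s₀ hs₀, norm_pos_iff.2 hs₀]
    refine le_antisymm (ciSup_le hratio) (opNorm_le_bound _ hM fun s => ?_)
    rcases eq_or_ne s 0 with rfl | hs
    · simp
    · exact abs_le.2 ⟨neg_le.1 (hle_neg s hs), hle s hs⟩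

theorem opNorm_le_of_ker_decomposition {𝕜 E F : Type*} [NontriviallyNormedField 𝕜]
    [SeminormedAddCommGroup E] [NormedSpace 𝕜 E] [SeminormedAddCommGroup F] [NormedSpace 𝕜 F]
    (φ₁ φ₂ : E →L[𝕜] F) {C : ℝ} (hC : 0 ≤ C)
    (hdecomp : ∀ v : E, ∃ w : E, φ₂ w = 0 ∧ φ₁ (v - w) = 0 ∧ ‖w‖ ≤ C * ‖v‖) :
    ‖φ₁‖ ≤ C * ‖φ₁ + φ₂‖ ∧ ‖φ₂‖ ≤ (1 + C) * ‖φ₁ + φ₂‖ := by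
  constructor
  all_goals
    refine opNorm_le_bound _ (by positivity) fun v => ?_
    obtain ⟨w, hw₂, hw₁, hw⟩ := hdecomp v
    rw [map_sub, sub_eq_zero] at hw₁
  · calc ‖φ₁ v‖ = ‖(φ₁ + φ₂) w‖ := by rw [add_apply, hw₂, add_zero, hw₁]
      _ ≤ ‖φ₁ + φ₂‖ * ‖w‖ := le_opNorm _ _
      _ ≤ C * ‖φ₁ + φ₂‖ * ‖v‖ := by nlinarith [opNorm_nonneg (φ₁ + φ₂)]
  · have hvw : ‖v - w‖ ≤ (1 + C) * ‖v‖ := by linarith [norm_sub_le v w]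
    calc ‖φ₂ v‖ = ‖(φ₁ + φ₂) (v - w)‖ := by simp [hw₁, hw₂]
      _ ≤ ‖φ₁ + φ₂‖ * ‖v - w‖ := le_opNorm _ _
      _ ≤ (1 + C) * ‖φ₁ + φ₂‖ * ‖v‖ := by nlinarith [opNorm_nonneg (φ₁ + φ₂)]

end ContinuousLinearMap

open ContinuousLinearMap in
theorem stmt1_general
    {S T₁ T₂ : Type*}
    [NormedAddCommGroup S] [InnerProductSpace ℝ S]
    [NormedAddCommGroup T₁] [InnerProductSpace ℝ T₁]
    [NormedAddCommGroup T₂] [InnerProductSpace ℝ T₂]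
    (c₁ : S →L[ℝ] T₁ →L[ℝ] ℝ) (c₂ : S →L[ℝ] T₂ →L[ℝ] ℝ)
    (β₁ β₂ : ℝ) (hβ₁ : 0 < β₁) (hβ₂ : 0 < β₂)
    (hinfsup₁ : ∀ t : T₁, β₁ * ‖t‖ ≤ ⨆ s : {s : S // s ≠ 0}, c₁ s.1 t / ‖s.1‖)
    (hinfsup₂ : ∀ t : T₂, β₂ * ‖t‖ ≤ ⨆ s : {s : S // s ≠ 0}, c₂ s.1 t / ‖s.1‖)
    (C : ℝ) (hC : 0 < C)
    (hdecomp : ∀ v : S, ∃ w : S,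
      (∀ t₂ : T₂, c₂ w t₂ = 0) ∧ (∀ t₁ : T₁, c₁ (v - w) t₁ = 0) ∧ ‖w‖ ≤ C * ‖v‖) :
    ∃ β : ℝ, 0 < β ∧ ∀ t₁ : T₁, ∀ t₂ : T₂,
      β * ‖(WithLp.equiv 2 (T₁ × T₂)).symm (t₁, t₂)‖ ≤
        ⨆ s : {s : S // s ≠ 0}, (c₁ s.1 t₁ + c₂ s.1 t₂) / ‖s.1‖ := by
  refine ⟨(C / β₁ + (1 + C) / β₂)⁻¹, by positivity, fun t₁ t₂ => ?_⟩
  let φ₁ := c₁.flip t₁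
  let φ₂ := c₂.flip t₂
  have hφ₁ : β₁ * ‖t₁‖ ≤ ‖φ₁‖ := (hinfsup₁ t₁).trans_eq (iSup_apply_div_norm_eq_opNorm φ₁)
  have hφ₂ : β₂ * ‖t₂‖ ≤ ‖φ₂‖ := (hinfsup₂ t₂).trans_eq (iSup_apply_div_norm_eq_opNorm φ₂)
  obtain ⟨hφ₁_le, hφ₂_le⟩ := opNorm_le_of_ker_decomposition φ₁ φ₂ hC.le fun v =>
    (hdecomp v).imp fun _ ⟨hw₂, hw₁, hw⟩ => ⟨hw₂ t₂, hw₁ t₁, hw⟩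
  have hsum : ‖t₁‖ + ‖t₂‖ ≤ (C / β₁ + (1 + C) / β₂) * ‖φ₁ + φ₂‖ := by
    have h₁ : ‖t₁‖ ≤ C / β₁ * ‖φ₁ + φ₂‖ := by
      rw [div_mul_eq_mul_div, le_div_iff₀ hβ₁]; linarith
    have h₂ : ‖t₂‖ ≤ (1 + C) / β₂ * ‖φ₁ + φ₂‖ := by
      rw [div_mul_eq_mul_div, le_div_iff₀ hβ₂]; linarith
    linarith
  have hcomb : ⨆ s : {s : S // s ≠ 0}, (c₁ s.1 t₁ + c₂ s.1 t₂) / ‖s.1‖ = ‖φ₁ + φ₂‖ :=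
    iSup_apply_div_norm_eq_opNorm (φ₁ + φ₂)
  rw [hcomb, inv_mul_le_iff₀ (by positivity)]
  exact (WithLp.prod_norm_le_norm_fst_add_norm_snd _).trans hsum

/-- If `c₁`, `c₂` satisfy inf-sup conditions for `{S,T₁}`, `{S,T₂}` and
`S = ker c₁ + ker c₂` with a bounded decomposition, then the combined bilinear
form `c(s,(t₁,t₂)) = c₁(s,t₁) + c₂(s,t₂)` satisfies the inf-sup condition for
`{S, T₁ × T₂}` (product Hilbert norm). -/
theorem stmt1
    {S T₁ T₂ : Type*}
    [NormedAddCommGroup S] [InnerProductSpace ℝ S] [CompleteSpace S]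
    [NormedAddCommGroup T₁] [InnerProductSpace ℝ T₁] [CompleteSpace T₁]
    [NormedAddCommGroup T₂] [InnerProductSpace ℝ T₂] [CompleteSpace T₂]
    (c₁ : S →L[ℝ] T₁ →L[ℝ] ℝ) (c₂ : S →L[ℝ] T₂ →L[ℝ] ℝ)
    (β₁ β₂ : ℝ) (hβ₁ : 0 < β₁) (hβ₂ : 0 < β₂)
    (hinfsup₁ : ∀ t : T₁, β₁ * ‖t‖ ≤ ⨆ s : {s : S // s ≠ 0}, c₁ s.1 t / ‖s.1‖)
    (hinfsup₂ : ∀ t : T₂, β₂ * ‖t‖ ≤ ⨆ s : {s : S // s ≠ 0}, c₂ s.1 t / ‖s.1‖)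
    (C : ℝ) (hC : 0 < C)
    (hdecomp : ∀ v : S, ∃ w : S,
      (∀ t₂ : T₂, c₂ w t₂ = 0) ∧ (∀ t₁ : T₁, c₁ (v - w) t₁ = 0) ∧ ‖w‖ ≤ C * ‖v‖) :
    ∃ β : ℝ, 0 < β ∧ ∀ t₁ : T₁, ∀ t₂ : T₂,
      β * ‖(WithLp.equiv 2 (T₁ × T₂)).symm (t₁, t₂)‖ ≤
        ⨆ s : {s : S // s ≠ 0}, (c₁ s.1 t₁ + c₂ s.1 t₂) / ‖s.1‖ :=
  stmt1_general c₁ c₂ β₁ β₂ hβ₁ hβ₂ hinfsup₁ hinfsup₂ C hC hdecomp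
end

section
/- Let X and Q be Hilbert spaces, a : X × X → ℝ a bounded symmetric bilinear form that is nonnegative (a(u,u) ≥ 0) and coercive on ker b (a(u,u) ≥ α‖u‖² for all u ∈ ker b), and b : X × Q → ℝ a bounded bilinear form satisfying the inf-sup condition for {X, Q}. Then for every pair of bounded linear functionals f ∈ X*, g ∈ Q*, the saddle point problem: find (u,p) ∈ X × Q with a(u,v) − b(v,p) = f(v) for all v ∈ X and b(u,q) = g(q) for all q ∈ Q, has a unique solution. -/
/-!
The inf-sup condition says that `q ↦ b(·, q)` is bounded below. Hence its Riesz representative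
`T : Q → X` has closed range `(ker T†)ᗮ = (ker b)ᗮ`, and `T†`, i.e. `u ↦ b(u, ·)`, is onto
because `T† T` is coercive. So pick `u₁` with `b(u₁, ·) = g`, correct it by the Lax–Milgram
solution `u₀ ∈ ker b` of `a(u₀, v) = f(v) - a(u₁, v)` on `ker b`, and find `p` with
`b(·, p) = a(u₁ + u₀, ·) - f`, which exists because this functional vanishes on `ker b`.
For uniqueness, a solution `(w, r)` of the homogeneous problem has `w ∈ ker b` and
`a(w, w) = b(w, r) = 0`, so `w = 0`, and then `b(·, r) = 0` forces `r = 0`.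
-/

open InnerProductSpace ContinuousLinearMap
open scoped RealInnerProductSpace InnerProduct

theorem iSup_apply_div_norm_le_opNorm {E : Type*} [NormedAddCommGroup E] [NormedSpace ℝ E]
    (ℓ : E →L[ℝ] ℝ) : ⨆ v : {v : E // v ≠ 0}, ℓ v.1 / ‖v.1‖ ≤ ‖ℓ‖ := by
  cases isEmpty_or_nonempty {v : E // v ≠ 0}
  · simp
  · refine ciSup_le fun v => ?_
    rw [div_le_iff₀ (norm_pos_iff.mpr v.2)]
    exact (le_abs_self _).trans (ℓ.le_opNorm v.1)

theorem eq_zero_of_apply_eq_flip {X Q : Type*} [NormedAddCommGroup X] [NormedSpace ℝ X]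
    [NormedAddCommGroup Q] [NormedSpace ℝ Q] {a : X →L[ℝ] X →L[ℝ] ℝ} {b : X →L[ℝ] Q →L[ℝ] ℝ}
    {α β : ℝ} (hα : 0 < α) (ha : ∀ u ∈ b.ker, α * ‖u‖ ^ 2 ≤ a u u)
    (hβ : 0 < β) (hb : ∀ q, β * ‖q‖ ≤ ‖b.flip q‖)
    {w : X} {r : Q} (hw : b w = 0) (hwr : a w = b.flip r) : w = 0 ∧ r = 0 := by
  have hw0 : w = 0 := by
    have h := ha w hw
    rw [hwr, flip_apply, hw, zero_apply] at h
    exact norm_eq_zero.mp ((sq_nonpos_iff _).mp (nonpos_of_mul_nonpos_right h hα))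
  have h := hb r
  rw [← hwr, hw0, map_zero, norm_zero] at h
  exact ⟨hw0, norm_le_zero_iff.mp (nonpos_of_mul_nonpos_right h hβ)⟩

theorem exists_mem_forall_apply_eq_of_coercive_on {X : Type*} [NormedAddCommGroup X]
    [InnerProductSpace ℝ X] (K : Submodule ℝ X) [CompleteSpace K] (a : X →L[ℝ] X →L[ℝ] ℝ)
    {α : ℝ} (hα : 0 < α) (ha : ∀ u ∈ K, α * ‖u‖ ^ 2 ≤ a u u) (ℓ : X →L[ℝ] ℝ) :
    ∃ u ∈ K, ∀ v ∈ K, a u v = ℓ v := by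
  have hcoer : IsCoercive (a.bilinearComp K.subtypeL K.subtypeL) :=
    ⟨α, hα, fun u => by
      rw [mul_assoc, ← sq, ← K.norm_coe]
      exact ha u u.2⟩
  obtain ⟨u, hu⟩ :=
    hcoer.continuousLinearEquivOfBilin.surjective ((toDual ℝ K).symm (ℓ ∘L K.subtypeL))
  refine ⟨u, u.2, fun v hv => ?_⟩
  have h := hcoer.continuousLinearEquivOfBilin_apply u ⟨v, hv⟩
  rw [hu, toDual_symm_apply] at h
  exact h.symm

section BoundedBelow

variable {X Q : Type*} [NormedAddCommGroup X] [InnerProductSpace ℝ X] [CompleteSpace X]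
  [NormedAddCommGroup Q] [InnerProductSpace ℝ Q] [CompleteSpace Q]
  {T : Q →L[ℝ] X} {β : ℝ}

theorem range_eq_orthogonal_ker_adjoint_of_bounded_below (hβ : 0 < β)
    (hT : ∀ q, β * ‖q‖ ≤ ‖T q‖) : T.range = (T†.ker)ᗮ := by
  have hanti : AntilipschitzWith (Real.toNNReal β⁻¹) T :=
    T.antilipschitz_of_bound fun q => by
      rw [Real.coe_toNNReal _ (inv_nonneg.mpr hβ.le), inv_mul_eq_div, le_div_iff₀ hβ, mul_comm]
      exact hT q
  have : CompleteSpace T.range :=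
    (hanti.isComplete_range T.uniformContinuous).completeSpace_coe
  rw [← T.orthogonal_range, Submodule.orthogonal_orthogonal]

theorem surjective_adjoint_of_bounded_below (hβ : 0 < β)
    (hT : ∀ q, β * ‖q‖ ≤ ‖T q‖) : Function.Surjective (T†) := by
  have hcoer : IsCoercive (innerSL ℝ ∘L (T† ∘L T)) := by
    refine ⟨β * β, by positivity, fun q => ?_⟩
    have := mul_le_mul (hT q) (hT q) (by positivity) (norm_nonneg _)
    calc β * β * ‖q‖ * ‖q‖ ≤ ‖T q‖ * ‖T q‖ := by linarith
      _ = ((innerSL ℝ ∘L (T† ∘L T)) q) q := by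
        rw [comp_apply, comp_apply, innerSL_apply_apply, adjoint_inner_left,
          real_inner_self_eq_norm_mul_norm]
  have hEq : ⇑(T† ∘L T) = hcoer.continuousLinearEquivOfBilin :=
    funext fun q => ext_inner_right ℝ fun q' => by
      rw [IsCoercive.continuousLinearEquivOfBilin_apply]; rfl
  intro q
  obtain ⟨p, hp⟩ := hcoer.continuousLinearEquivOfBilin.surjective q
  exact ⟨T p, by rw [← hp, ← hEq]; rfl⟩

end BoundedBelow

section Saddle

variable {X Q : Type*} [NormedAddCommGroup X] [InnerProductSpace ℝ X] [CompleteSpace X]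
  [NormedAddCommGroup Q] [InnerProductSpace ℝ Q]

noncomputable def rieszFlip (b : X →L[ℝ] Q →L[ℝ] ℝ) : Q →L[ℝ] X :=
  (toDual ℝ X).symm.toContinuousLinearEquiv.toContinuousLinearMap ∘L b.flip

variable {b : X →L[ℝ] Q →L[ℝ] ℝ} {β : ℝ}

theorem inner_rieszFlip_apply (q : Q) (v : X) : ⟪rieszFlip b q, v⟫ = b v q :=
  toDual_symm_apply

theorem norm_rieszFlip_apply (q : Q) : ‖rieszFlip b q‖ = ‖b.flip q‖ :=
  (toDual ℝ X).symm.norm_map _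

variable [CompleteSpace Q]

theorem ker_adjoint_rieszFlip : (rieszFlip b)†.ker = b.ker := by
  ext u
  simp only [LinearMap.mem_ker, coe_coe]
  constructor
  · intro hu
    ext q
    rw [← inner_rieszFlip_apply, ← adjoint_inner_right, hu, inner_zero_right, zero_apply]
  · intro hu
    refine ext_inner_left ℝ fun q => ?_
    rw [adjoint_inner_right, inner_rieszFlip_apply, hu, zero_apply, inner_zero_right]

theorem exists_eq_of_bounded_below (hβ : 0 < β) (hb : ∀ q, β * ‖q‖ ≤ ‖b.flip q‖)
    (g : Q →L[ℝ] ℝ) : ∃ u, b u = g := by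
  obtain ⟨u, hu⟩ := surjective_adjoint_of_bounded_below hβ
    (fun q => (norm_rieszFlip_apply (b := b) q).symm ▸ hb q) ((toDual ℝ Q).symm g)
  refine ⟨u, ext fun q => ?_⟩
  rw [← inner_rieszFlip_apply, ← adjoint_inner_right, hu, real_inner_comm, toDual_symm_apply]

theorem exists_flip_eq_of_bounded_below (hβ : 0 < β) (hb : ∀ q, β * ‖q‖ ≤ ‖b.flip q‖)
    (ℓ : X →L[ℝ] ℝ) (hℓ : b.ker ≤ ℓ.ker) : ∃ p, b.flip p = ℓ := by
  have hmem : (toDual ℝ X).symm ℓ ∈ ((rieszFlip b)†.ker)ᗮ := by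
    rw [ker_adjoint_rieszFlip]
    intro k hk
    rw [real_inner_comm, toDual_symm_apply]
    exact hℓ hk
  rw [← range_eq_orthogonal_ker_adjoint_of_bounded_below hβ
    (fun q => (norm_rieszFlip_apply (b := b) q).symm ▸ hb q)] at hmem
  obtain ⟨p, hp⟩ := hmem
  refine ⟨p, ext fun v => ?_⟩
  rw [flip_apply, ← inner_rieszFlip_apply, ← toDual_symm_apply (𝕜 := ℝ)]
  exact congrArg (⟪·, v⟫) hp

theorem exists_saddle_point {a : X →L[ℝ] X →L[ℝ] ℝ} {α : ℝ} (hα : 0 < α)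
    (ha : ∀ u ∈ b.ker, α * ‖u‖ ^ 2 ≤ a u u) (hβ : 0 < β) (hb : ∀ q, β * ‖q‖ ≤ ‖b.flip q‖)
    (f : X →L[ℝ] ℝ) (g : Q →L[ℝ] ℝ) : ∃ u p, a u - b.flip p = f ∧ b u = g := by
  have : CompleteSpace b.ker := (isClosed_ker b).completeSpace_coe
  obtain ⟨u₁, hu₁⟩ := exists_eq_of_bounded_below hβ hb g
  obtain ⟨u₀, hu₀, hau₀⟩ := exists_mem_forall_apply_eq_of_coercive_on b.ker a hα ha (f - a u₁)
  obtain ⟨p, hp⟩ := exists_flip_eq_of_bounded_below hβ hb (a (u₁ + u₀) - f) fun k hk => by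
    simp [hau₀ k hk]
  refine ⟨u₁ + u₀, p, by rw [hp, sub_sub_cancel], ?_⟩
  rw [map_add, show b u₀ = 0 from hu₀, add_zero, hu₁]

end Saddle

theorem stmt2_general
    {X Q : Type*} [NormedAddCommGroup X] [InnerProductSpace ℝ X] [CompleteSpace X]
    [NormedAddCommGroup Q] [InnerProductSpace ℝ Q] [CompleteSpace Q]
    (a : X →L[ℝ] X →L[ℝ] ℝ) (b : X →L[ℝ] Q →L[ℝ] ℝ)
    (α : ℝ) (hα : 0 < α)
    (hcoer : ∀ u : X, (∀ q : Q, b u q = 0) → α * ‖u‖ ^ 2 ≤ a u u)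
    (β : ℝ) (hβ : 0 < β)
    (hinfsup : ∀ q : Q, β * ‖q‖ ≤ ⨆ v : {v : X // v ≠ 0}, b v.1 q / ‖v.1‖)
    (f : X →L[ℝ] ℝ) (g : Q →L[ℝ] ℝ) :
    ∃! up : X × Q, (∀ v : X, a up.1 v - b v up.2 = f v) ∧ (∀ q : Q, b up.1 q = g q) := by
  have hb : ∀ q, β * ‖q‖ ≤ ‖b.flip q‖ := fun q =>
    (hinfsup q).trans (iSup_apply_div_norm_le_opNorm (b.flip q))
  have ha : ∀ u ∈ b.ker, α * ‖u‖ ^ 2 ≤ a u u := fun u hu =>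
    hcoer u fun q => by rw [show b u = 0 from hu, zero_apply]
  obtain ⟨u, p, hup, hu⟩ := exists_saddle_point hα ha hβ hb f g
  have hup_apply (v : X) : a u v - b v p = f v := congr($hup v)
  refine ⟨(u, p), ⟨hup_apply, fun q => congr($hu q)⟩, ?_⟩
  rintro ⟨u', p'⟩ ⟨hup', hu'⟩
  dsimp only at hup' hu'
  obtain ⟨hw, hr⟩ := eq_zero_of_apply_eq_flip (w := u' - u) (r := p' - p) hα ha hβ hb
    (ext fun q => by simp [hu', hu])
    (ext fun v => by simp only [map_sub, sub_apply, flip_apply]; linarith [hup' v, hup_apply v])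
  exact Prod.ext (sub_eq_zero.mp hw) (sub_eq_zero.mp hr)

/-- Brezzi's theorem: if `a` is bounded, symmetric, nonnegative and coercive on
`ker b`, and `b` satisfies the inf-sup condition for `{X,Q}`, then for every
`f ∈ X*`, `g ∈ Q*` the saddle point problem has a unique solution. -/
theorem stmt2
    {X Q : Type*} [NormedAddCommGroup X] [InnerProductSpace ℝ X] [CompleteSpace X]
    [NormedAddCommGroup Q] [InnerProductSpace ℝ Q] [CompleteSpace Q]
    (a : X →L[ℝ] X →L[ℝ] ℝ) (b : X →L[ℝ] Q →L[ℝ] ℝ)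
    (hsymm : ∀ u v : X, a u v = a v u)
    (hnonneg : ∀ u : X, 0 ≤ a u u)
    (α : ℝ) (hα : 0 < α)
    (hcoer : ∀ u : X, (∀ q : Q, b u q = 0) → α * ‖u‖ ^ 2 ≤ a u u)
    (β : ℝ) (hβ : 0 < β)
    (hinfsup : ∀ q : Q, β * ‖q‖ ≤ ⨆ v : {v : X // v ≠ 0}, b v.1 q / ‖v.1‖)
    (f : X →L[ℝ] ℝ) (g : Q →L[ℝ] ℝ) :
    ∃! up : X × Q, (∀ v : X, a up.1 v - b v up.2 = f v) ∧ (∀ q : Q, b up.1 q = g q) :=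
  stmt2_general a b α hα hcoer β hβ hinfsup f g
end

section
/- Let Γ be a closed curve (boundary of a 2D Lipschitz domain), H^{-1/2}₀(Γ) = {ξ ∈ H^{-1/2}(Γ) : ⟨ξ,1⟩_Γ = 0}. Suppose D⁻¹ : H^{-1/2}₀(Γ) → H^{1/2}(Γ) is a bounded right inverse of arc-length differentiation, L : H^{1/2}(Γ) → H¹(Ω) a bounded right inverse of the trace operator, and S_h : H¹(Ω) → V_h a uniformly H¹-bounded projection preserving traces in Ψ_h = γV_h. If ξ ∈ H^{-1/2}₀(Γ) satisfies D⁻¹ξ ∈ Ψ_h, then v_h := ∇^⊥ S_h L D⁻¹ ξ satisfies v_h·ν = ξ, div v_h = 0, and ‖v_h‖_{H(div,Ω)} ≤ C ‖ξ‖_{H^{-1/2}(Γ)} with C independent of h and ξ. -/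
theorem ContinuousLinearMap.norm_apply_apply_apply_le {E F G H : Type*}
    [SeminormedAddCommGroup E] [NormedSpace ℝ E] [SeminormedAddCommGroup F] [NormedSpace ℝ F]
    [SeminormedAddCommGroup G] [NormedSpace ℝ G] [SeminormedAddCommGroup H] [NormedSpace ℝ H]
    (S : G →L[ℝ] H) (L : F →L[ℝ] G) (D : E →L[ℝ] F) (x : E) :
    ‖S (L (D x))‖ ≤ ‖S‖ * ‖L‖ * ‖D‖ * ‖x‖ :=
  calc ‖S (L (D x))‖ = ‖(S.comp L).comp D x‖ := rfl
    _ ≤ ‖(S.comp L).comp D‖ * ‖x‖ := le_opNorm _ _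
    _ ≤ ‖S‖ * ‖L‖ * ‖D‖ * ‖x‖ := by
      gcongr
      exact (opNorm_comp_le _ _).trans (by gcongr; exact opNorm_comp_le _ _)

theorem trace_apply_apply_lift_of_mem {H1 Hh : Type*} [AddCommGroup H1] [Module ℝ H1]
    [AddCommGroup Hh] [Module ℝ Hh] {γ : H1 →ₗ[ℝ] Hh} {L : Hh → H1} (hL : ∀ ψ, γ (L ψ) = ψ)
    {Vh : Submodule ℝ H1} {Sh : H1 → H1} (hShtrace : ∀ w, γ w ∈ Vh.map γ → γ (Sh w) = γ w)
    {ψ : Hh} (hψ : ψ ∈ Vh.map γ) :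
    γ (Sh (L ψ)) = ψ := by
  rw [hShtrace _ (by rwa [hL]), hL]

/-- Lifting by arc-length integration (abstract form). `N = H^{-1/2}(Γ)`,
`Hh = H^{1/2}(Γ)`, `H1 = H¹(Ω)`, `Hd = H(div,Ω)`, `L2 = L²(Ω)`. Given a bounded
right inverse `Dinv` of the arc-length differentiation `dΓ` on the zero-mean
distributions (`m ξ = ⟨ξ,1⟩_Γ`), a bounded right inverse `L` of the trace `γ`,
a uniformly bounded operator `Sh` preserving traces in `Ψ_h = γ(V_h)`, and the
rotated gradient `curl = ∇^⊥ : H¹ → H(div)` (norm-nonincreasing, divergence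
free, with normal trace `ntr (curl u) = (γ u)'`), if `ξ` has zero mean and
`D⁻¹ξ ∈ Ψ_h`, then `v_h = ∇^⊥ S_h L D⁻¹ ξ` satisfies `v_h·ν = ξ`, `div v_h = 0`
and `‖v_h‖ ≤ C‖ξ‖` with `C = C_S ‖L‖ ‖D⁻¹‖` independent of `h` and `ξ`. -/
theorem stmt13 {N Hh H1 Hd L2 : Type*}
    [NormedAddCommGroup N] [NormedSpace ℝ N]
    [NormedAddCommGroup Hh] [NormedSpace ℝ Hh]
    [NormedAddCommGroup H1] [NormedSpace ℝ H1]
    [NormedAddCommGroup Hd] [NormedSpace ℝ Hd]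
    [NormedAddCommGroup L2] [NormedSpace ℝ L2]
    (dΓ : Hh →L[ℝ] N) (m : N →L[ℝ] ℝ)
    (Dinv : N →L[ℝ] Hh) (hDinv : ∀ ξ : N, m ξ = 0 → dΓ (Dinv ξ) = ξ)
    (γ : H1 →L[ℝ] Hh) (L : Hh →L[ℝ] H1) (hL : ∀ ψ : Hh, γ (L ψ) = ψ)
    (Vh : Submodule ℝ H1) (Sh : H1 →L[ℝ] H1)
    (CS : ℝ) (hCS0 : 0 ≤ CS) (hSh : ∀ w : H1, ‖Sh w‖ ≤ CS * ‖w‖)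
    (hShtrace : ∀ w : H1, γ w ∈ Vh.map (γ : H1 →ₗ[ℝ] Hh) → γ (Sh w) = γ w)
    (curl : H1 →L[ℝ] Hd) (dv : Hd →L[ℝ] L2) (ntr : Hd →ₗ[ℝ] N)
    (hntr : ∀ w : H1, ntr (curl w) = dΓ (γ w))
    (hdivcurl : ∀ w : H1, dv (curl w) = 0)
    (hcurlnorm : ∀ w : H1, ‖curl w‖ ≤ ‖w‖)
    (ξ : N) (hξ0 : m ξ = 0) (hξΨ : Dinv ξ ∈ Vh.map (γ : H1 →ₗ[ℝ] Hh)) :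
    ntr (curl (Sh (L (Dinv ξ)))) = ξ ∧
    dv (curl (Sh (L (Dinv ξ)))) = 0 ∧
    ‖curl (Sh (L (Dinv ξ)))‖ ≤ CS * ‖L‖ * ‖Dinv‖ * ‖ξ‖ := by
  have htrace : γ (Sh (L (Dinv ξ))) = Dinv ξ :=
    trace_apply_apply_lift_of_mem (γ := (γ : H1 →ₗ[ℝ] Hh)) hL hShtrace hξΨ
  refine ⟨by rw [hntr, htrace, hDinv ξ hξ0], hdivcurl _, ?_⟩
  have hShnorm : ‖Sh‖ ≤ CS := Sh.opNorm_le_bound hCS0 hSh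
  calc ‖curl (Sh (L (Dinv ξ)))‖ ≤ ‖Sh (L (Dinv ξ))‖ := hcurlnorm _
    _ ≤ ‖Sh‖ * ‖L‖ * ‖Dinv‖ * ‖ξ‖ := Sh.norm_apply_apply_apply_le L Dinv ξ
    _ ≤ CS * ‖L‖ * ‖Dinv‖ * ‖ξ‖ := by gcongr
end

section
/- Consistency error identity: Let u_S·ν = u_D·ν on Σ hold for the exact solution and let p_D ∈ H¹(Ω_D). For any discrete pair (v_S^h, v_D^h) with v_D^h·ν = R_h(v_S^h·ν), where R_h is the L²(Σ)-orthogonal projection onto Φ_h^D, one has ⟨(v_S^h − v_D^h)·ν, p_D⟩_Σ = ⟨(v_S^h − Π₀v_S^h)·ν, p_D − R_h p_D⟩_Σ, where Π₀ is the L²(Σ)-orthogonal projection onto piecewise constants (assumed contained in Φ_h^D). Consequently |⟨(v_S^h − v_D^h)·ν, p_D⟩_Σ| ≤ ‖v_S^h − Π₀v_S^h‖_{L²(Σ)} ‖p_D − R_h p_D‖_{L²(Σ)}. -/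
/-!
Both `vS - R_h vS` and `pD - R_h pD` are orthogonal to `Φ = ran R_h`. The first lets us replace
`pD` by `pD - R_h pD`; the second lets us then replace `vS - R_h vS` by `vS - Π₀ vS`, since the two
differ by `R_h vS - Π₀ vS ∈ Φ`. Cauchy–Schwarz finishes.
-/

open RealInnerProductSpace

namespace Submodule

variable {H : Type*} [NormedAddCommGroup H] [InnerProductSpace ℝ H]
  (K : Submodule ℝ H) [K.HasOrthogonalProjection]

theorem real_inner_eq_inner_sub_orthogonalProjectionOnto {u : H} (hu : u ∈ Kᗮ) (y : H) :
    ⟪u, y⟫ = ⟪u, y - (K.orthogonalProjectionOnto y : H)⟫ := by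
  have hperp : ⟪u, (K.orthogonalProjectionOnto y : H)⟫ = 0 :=
    K.inner_left_of_mem_orthogonal (K.orthogonalProjectionOnto y).2 hu
  rw [inner_sub_right, hperp, sub_zero]

theorem real_inner_sub_orthogonalProjectionOnto_congr_left {u u' : H} (h : u - u' ∈ K) (y : H) :
    ⟪u, y - (K.orthogonalProjectionOnto y : H)⟫ = ⟪u', y - (K.orthogonalProjectionOnto y : H)⟫ := by
  have hperp : ⟪u - u', y - (K.orthogonalProjectionOnto y : H)⟫ = 0 :=
    K.sub_starProjection_mem_orthogonal y _ h
  rwa [inner_sub_left, sub_eq_zero] at hperp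

end Submodule

/-- Consistency error identity: in `H = L²(Σ)`, let `Φ = Φ_h^D` (the range of
`R_h`) contain the piecewise constants `Φ₀` (the range of `Π₀`). If
`v_D^h·ν = R_h(v_S^h·ν)`, then
`⟨(v_S^h − v_D^h)·ν, p_D⟩ = ⟨(v_S^h − Π₀v_S^h)·ν, p_D − R_h p_D⟩`, and
consequently the Cauchy–Schwarz bound holds. Here `vS` stands for `v_S^h·ν`
and `vDν` for `v_D^h·ν`. -/
theorem stmt19 {H : Type*} [NormedAddCommGroup H] [InnerProductSpace ℝ H]
    (Φ Φ₀ : Submodule ℝ H)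
    [Φ.HasOrthogonalProjection] [Φ₀.HasOrthogonalProjection]
    (hsub : Φ₀ ≤ Φ)
    (vS pD vDν : H) (hvD : vDν = (Φ.orthogonalProjectionOnto vS : H)) :
    ⟪vS - vDν, pD⟫ =
      ⟪vS - (Φ₀.orthogonalProjectionOnto vS : H), pD - (Φ.orthogonalProjectionOnto pD : H)⟫ ∧
    |⟪vS - vDν, pD⟫| ≤
      ‖vS - (Φ₀.orthogonalProjectionOnto vS : H)‖ * ‖pD - (Φ.orthogonalProjectionOnto pD : H)‖ := by
  have hvS_perp : vS - vDν ∈ Φᗮ := hvD ▸ Φ.sub_starProjection_mem_orthogonal vS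
  have hdiff : (vS - vDν) - (vS - (Φ₀.orthogonalProjectionOnto vS : H)) ∈ Φ := by
    rw [sub_sub_sub_cancel_left, hvD]
    exact Φ.sub_mem (hsub (Φ₀.orthogonalProjectionOnto vS).2) (Φ.orthogonalProjectionOnto vS).2
  have key : ⟪vS - vDν, pD⟫ =
      ⟪vS - (Φ₀.orthogonalProjectionOnto vS : H), pD - (Φ.orthogonalProjectionOnto pD : H)⟫ :=
    (Φ.real_inner_eq_inner_sub_orthogonalProjectionOnto hvS_perp pD).trans
      (Φ.real_inner_sub_orthogonalProjectionOnto_congr_left hdiff pD)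
  exact ⟨key, key ▸ abs_real_inner_le_norm _ _⟩
end
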